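/- Let ρ be a PSD matrix indexed by (Fin d_a) × (Fin d) with trace 1, let u be a Hermitian matrix indexed by (Fin d_a) × (Fin d), and let z be a Hermitian matrix indexed by (Fin d_a) × J_k such that Re(Tr(ρ·u)) + λmax(−A†(u) − T(z)) + λmax(z) < 0. Define W := −u − (λmax(−A†(u) − T(z)) + λmax(z))·I and Z := −z + λmax(z)·I. Then Re(Tr(ρ·W)) > 0, Z is PSD, the matrix A†(W) + T(Z) is negative semidefinite, and Re(Tr(A(X)·W)) ≤ 0 for every Hermitian matrix X indexed by (Fin d_a) × J_k such that both X and T(X) are PSD; that is, W is an entanglement witness certifying that ρ does not lie in PST_k. -/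

import Mathlib

open Matrix
open scoped Kronecker ComplexOrder

noncomputable section

instance monoDecidable {k d : ℕ} : DecidablePred (Monotone : (Fin k → Fin d) → Prop) :=
  fun f => decidable_of_iff (∀ a b : Fin k, a ≤ b → f a ≤ f b) Iff.rfl

/-- `Jk d k` : nondecreasing sequences of length `k` from `{0, …, d-1}`. -/
abbrev Jk (d k : ℕ) := {f : Fin k → Fin d // Monotone f}

/-- the nondecreasing rearrangement of a sequence. -/
def sortTuple {d k : ℕ} (i : Fin k → Fin d) : Jk d k :=
  ⟨i ∘ Tuple.sort i, Tuple.monotone_sort i⟩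

/-- `permCount j` : the number of sequences whose sorted rearrangement is `j`. -/
def permCount {d k : ℕ} (j : Jk d k) : ℕ :=
  (Finset.univ.filter fun i : Fin k → Fin d => sortTuple i = j).card

/-- The scaled partition matrix `P`. -/
def Pmat (d k : ℕ) : Matrix (Fin k → Fin d) (Jk d k) ℂ :=
  fun i j => if sortTuple i = j then (((permCount j : ℝ) ^ (-(1/2) : ℝ) : ℝ) : ℂ) else 0

/-- `cons0 b r` is the sequence `b⌢r` sending `0` to `b` and `s+1` to `r s`. -/
def cons0 {d k : ℕ} (b : Fin d) (r : Fin (k - 1) → Fin d) : Fin k → Fin d :=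
  fun s => if h : (s : ℕ) = 0 then b else r ⟨(s : ℕ) - 1, by have := s.isLt; omega⟩

/-- Partial trace over the last `k - 1` factors. -/
def PTr (da d k : ℕ)
    (M : Matrix (Fin da × (Fin k → Fin d)) (Fin da × (Fin k → Fin d)) ℂ) :
    Matrix (Fin da × Fin d) (Fin da × Fin d) ℂ :=
  fun p q => ∑ r : Fin (k - 1) → Fin d, M (p.1, cons0 p.2 r) (q.1, cons0 q.2 r)

/-- The operator `A`. -/
def Amap (da d k : ℕ) (X : Matrix (Fin da × Jk d k) (Fin da × Jk d k) ℂ) :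
    Matrix (Fin da × Fin d) (Fin da × Fin d) ℂ :=
  PTr da d k (((1 : Matrix (Fin da) (Fin da) ℂ) ⊗ₖ Pmat d k) * X *
    ((1 : Matrix (Fin da) (Fin da) ℂ) ⊗ₖ Pmat d k)ᴴ)

/-- The extension operator `E` : `E(W) ((a,i),(a',i')) = W ((a, i 0), (a', i' 0))` when
`i` and `i'` agree on all later coordinates, and `0` otherwise. -/
def Emat (da d k : ℕ) (hk : 0 < k)
    (W : Matrix (Fin da × Fin d) (Fin da × Fin d) ℂ) :
    Matrix (Fin da × (Fin k → Fin d)) (Fin da × (Fin k → Fin d)) ℂ :=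
  fun p q =>
    if ∀ s : Fin (k - 1),
        p.2 ⟨(s : ℕ) + 1, by have := s.isLt; omega⟩ =
          q.2 ⟨(s : ℕ) + 1, by have := s.isLt; omega⟩
    then W (p.1, p.2 ⟨0, hk⟩) (q.1, q.2 ⟨0, hk⟩) else 0

/-- The adjoint operator `A†`. -/
def Adag (da d k : ℕ) (hk : 0 < k)
    (W : Matrix (Fin da × Fin d) (Fin da × Fin d) ℂ) :
    Matrix (Fin da × Jk d k) (Fin da × Jk d k) ℂ :=
  ((1 : Matrix (Fin da) (Fin da) ℂ) ⊗ₖ Pmat d k)ᴴ * Emat da d k hk W *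
    ((1 : Matrix (Fin da) (Fin da) ℂ) ⊗ₖ Pmat d k)

/-- Partial transpose in the second index. -/
def pTransp {m α : Type*} (M : Matrix (m × α) (m × α) ℂ) : Matrix (m × α) (m × α) ℂ :=
  fun p q => M (p.1, q.2) (q.1, p.2)

/-- Squared Frobenius norm. -/
def frobSq {α β : Type*} [Fintype α] [Fintype β] (M : Matrix α β ℂ) : ℝ :=
  ∑ p, ∑ q, ‖M p q‖ ^ 2

/-- Largest eigenvalue of a Hermitian matrix. -/
def lamMax {n : Type*} [Fintype n] [DecidableEq n]
    {M : Matrix n n ℂ} (hM : M.IsHermitian) : ℝ :=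
  ⨆ i, hM.eigenvalues i

end


/-! Both certificates come from the spectral bound `λmax(M) • 1 - M ⪰ 0`. It gives `Z ⪰ 0` at
once, and `-(A†(W) + T(Z)) = λmax(N) • 1 - N` with `N = -A†(u) - T(z)`, because `A†` and `T` are
linear and fix the identity (`A†(1) = 1` since `P` is an isometry). For `X ⪰ 0` with `T(X) ⪰ 0`,
`A†` is the trace adjoint of `A` and `T` is self-adjoint for the trace pairing, so
`Tr(A(X) W) = -Tr(X (-(A†(W) + T(Z)))) - Tr(T(X) Z)`, and the trace of a product of two PSD
matrices is nonnegative. `Tr(ρ W) > 0` is the hypothesis rearranged using `Tr ρ = 1`. -/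

namespace Matrix

variable {n : Type*} [Fintype n]

theorem PosSemidef.trace_mul_nonneg {𝕜 : Type*} [RCLike 𝕜] {A B : Matrix n n 𝕜}
    (hA : A.PosSemidef) (hB : B.PosSemidef) : 0 ≤ (A * B).trace := by
  classical
  open scoped MatrixOrder in
  obtain ⟨C, rfl⟩ := CStarAlgebra.nonneg_iff_eq_star_mul_self.mp hB.nonneg
  rw [← Matrix.mul_assoc, trace_mul_cycle]
  exact (hA.mul_mul_conjTranspose_same C).trace_nonneg

theorem IsHermitian.posSemidef_smul_one_sub {𝕜 : Type*} [RCLike 𝕜] [DecidableEq n]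
    {M : Matrix n n 𝕜} (hM : M.IsHermitian) {c : ℝ} (hc : ∀ i, hM.eigenvalues i ≤ c) :
    ((c : 𝕜) • (1 : Matrix n n 𝕜) - M).PosSemidef := by
  open scoped MatrixOrder in
  have hle : M ≤ algebraMap ℝ (Matrix n n 𝕜) c := by
    refine le_algebraMap_of_spectrum_le ?_ hM.isSelfAdjoint
    rw [hM.spectrum_real_eq_range_eigenvalues]
    rintro _ ⟨i, rfl⟩
    exact hc i
  rw [Matrix.le_iff, Algebra.algebraMap_eq_smul_one] at hle
  simpa using hle

end Matrix

section LamMax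

variable {n : Type*} [Fintype n] [DecidableEq n] {M : Matrix n n ℂ}

theorem eigenvalues_le_lamMax (hM : M.IsHermitian) (i : n) : hM.eigenvalues i ≤ lamMax hM :=
  le_ciSup (Set.finite_range _).bddAbove i

theorem posSemidef_lamMax_smul_one_sub (hM : M.IsHermitian) :
    ((lamMax hM : ℂ) • (1 : Matrix n n ℂ) - M).PosSemidef :=
  hM.posSemidef_smul_one_sub (eigenvalues_le_lamMax hM)

end LamMax

section PartialTranspose

variable {m α : Type*}

theorem pTransp_add (A B : Matrix (m × α) (m × α) ℂ) :
    pTransp (A + B) = pTransp A + pTransp B := rfl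

theorem pTransp_neg (A : Matrix (m × α) (m × α) ℂ) : pTransp (-A) = -pTransp A := rfl

theorem pTransp_smul (c : ℂ) (A : Matrix (m × α) (m × α) ℂ) :
    pTransp (c • A) = c • pTransp A := rfl

theorem pTransp_one [DecidableEq m] [DecidableEq α] :
    pTransp (1 : Matrix (m × α) (m × α) ℂ) = 1 := by
  ext ⟨a, x⟩ ⟨b, y⟩
  simp only [pTransp, one_apply, Prod.mk.injEq, eq_comm (a := x)]

theorem trace_mul_pTransp [Fintype m] [Fintype α] (X Z : Matrix (m × α) (m × α) ℂ) :
    (X * pTransp Z).trace = (pTransp X * Z).trace := by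
  simp only [trace, diag, mul_apply, pTransp, Fintype.sum_prod_type]
  refine Finset.sum_congr rfl fun a _ => ?_
  rw [Finset.sum_comm]
  conv_rhs => rw [Finset.sum_comm]
  exact Finset.sum_congr rfl fun b _ => Finset.sum_comm

end PartialTranspose

section PartitionMatrix

variable {d k : ℕ}

theorem sortTuple_coe (j : Jk d k) : sortTuple j.1 = j :=
  Subtype.ext <| show j.1 ∘ Tuple.sort j.1 = j.1 by
    rw [Tuple.sort_eq_refl_iff_monotone.mpr j.2]
    rfl

theorem permCount_pos (j : Jk d k) : 0 < permCount j :=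
  Finset.card_pos.mpr ⟨j.1, by simp [sortTuple_coe]⟩

theorem Pmat_conjTranspose_mul_self : (Pmat d k)ᴴ * Pmat d k = 1 := by
  ext j j'
  by_cases h : j = j'
  · subst h
    have hp : (0 : ℝ) < permCount j := by exact_mod_cast permCount_pos j
    have hterm : ∀ i, star (Pmat d k i j) * Pmat d k i j =
        if sortTuple i = j then ((permCount j : ℂ))⁻¹ else 0 := by
      intro i
      unfold Pmat
      split_ifs
      · rw [Complex.star_def, Complex.conj_ofReal, ← Complex.ofReal_mul, ← Real.rpow_add hp]
        norm_num [Real.rpow_neg_one]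
      · simp
    simp only [mul_apply, conjTranspose_apply, hterm, Finset.sum_ite, Finset.sum_const_zero,
      add_zero, Finset.sum_const, nsmul_eq_mul, one_apply_eq]
    exact mul_inv_cancel₀ (by exact_mod_cast hp.ne')
  · rw [one_apply_ne h]
    refine Finset.sum_eq_zero fun i _ => ?_
    simp only [conjTranspose_apply, Pmat]
    split_ifs with h1 h2
    · exact absurd (h1.symm.trans h2) h
    all_goals simp

end PartitionMatrix

theorem one_kronecker_conjTranspose_mul_self {m p q : Type*} [Fintype m] [DecidableEq m]
    [Fintype p] [DecidableEq q] {V : Matrix p q ℂ} (hV : Vᴴ * V = 1) :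
    ((1 : Matrix m m ℂ) ⊗ₖ V)ᴴ * ((1 : Matrix m m ℂ) ⊗ₖ V) = 1 := by
  rw [conjTranspose_kronecker, ← mul_kronecker_mul, hV, conjTranspose_one, Matrix.one_mul,
    one_kronecker_one]

section ExtensionOperator

variable {da d k : ℕ}

theorem cons0_zero (hk : 0 < k) (b : Fin d) (r : Fin (k - 1) → Fin d) :
    cons0 b r ⟨0, hk⟩ = b := rfl

theorem cons0_succ (b : Fin d) (r : Fin (k - 1) → Fin d) (s : Fin (k - 1))
    (h : (s : ℕ) + 1 < k) : cons0 b r ⟨(s : ℕ) + 1, h⟩ = r s := rfl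

variable (d) in
def consEquiv (hk : 0 < k) : Fin d × (Fin (k - 1) → Fin d) ≃ (Fin k → Fin d) where
  toFun p := cons0 p.1 p.2
  invFun i := (i ⟨0, hk⟩, fun s => i ⟨(s : ℕ) + 1, by omega⟩)
  left_inv _ := rfl
  right_inv i := funext fun t => by
    by_cases ht : (t : ℕ) = 0
    · simp only [cons0, ht, dite_true]
      exact congrArg i (Fin.ext ht.symm)
    · simp only [cons0, ht, dite_false]
      exact congrArg i (Fin.ext (by simp; omega))

theorem consEquiv_apply (hk : 0 < k) (p : Fin d × (Fin (k - 1) → Fin d)) :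
    consEquiv d hk p = cons0 p.1 p.2 := rfl

theorem cons0_inj (hk : 0 < k) {b b' : Fin d} {r r' : Fin (k - 1) → Fin d} :
    cons0 b r = cons0 b' r' ↔ b = b' ∧ r = r' := by
  rw [← consEquiv_apply hk (b, r), ← consEquiv_apply hk (b', r'),
    (consEquiv d hk).injective.eq_iff, Prod.mk.injEq]

theorem Emat_cons0 (hk : 0 < k) (W : Matrix (Fin da × Fin d) (Fin da × Fin d) ℂ)
    (a a' : Fin da) (b b' : Fin d) (r r' : Fin (k - 1) → Fin d) :
    Emat da d k hk W (a, cons0 b r) (a', cons0 b' r') =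
      if r = r' then W (a, b) (a', b') else 0 := by
  simp only [Emat, cons0_zero, cons0_succ, ← funext_iff]

theorem Emat_one (hk : 0 < k) : Emat da d k hk 1 = 1 := by
  ext ⟨a, i⟩ ⟨a', i'⟩
  obtain ⟨⟨b, r⟩, rfl⟩ := (consEquiv d hk).surjective i
  obtain ⟨⟨b', r'⟩, rfl⟩ := (consEquiv d hk).surjective i'
  simp only [consEquiv_apply, one_apply, Prod.mk.injEq, cons0_inj hk, Emat_cons0]
  by_cases hr : r = r' <;> simp [hr]

theorem Emat_add (hk : 0 < k) (U V : Matrix (Fin da × Fin d) (Fin da × Fin d) ℂ) :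
    Emat da d k hk (U + V) = Emat da d k hk U + Emat da d k hk V := by
  ext
  simp only [Emat, Matrix.add_apply]
  split_ifs <;> simp

theorem Emat_smul (hk : 0 < k) (c : ℂ) (U : Matrix (Fin da × Fin d) (Fin da × Fin d) ℂ) :
    Emat da d k hk (c • U) = c • Emat da d k hk U := by
  ext
  simp only [Emat, Matrix.smul_apply]
  split_ifs <;> simp

theorem trace_PTr_mul (hk : 0 < k)
    (M : Matrix (Fin da × (Fin k → Fin d)) (Fin da × (Fin k → Fin d)) ℂ)
    (W : Matrix (Fin da × Fin d) (Fin da × Fin d) ℂ) :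
    (PTr da d k M * W).trace = (M * Emat da d k hk W).trace := by
  simp only [trace, diag, mul_apply, PTr, Fintype.sum_prod_type, Finset.sum_mul]
  refine Finset.sum_congr rfl fun a _ => ?_
  -- after writing both column tuples as `b⌢r`, `E(W)` is diagonal in the tails `r`
  rw [← (consEquiv d hk).sum_comp, Fintype.sum_prod_type]
  refine Finset.sum_congr rfl fun b _ => ?_
  simp only [← (consEquiv d hk).sum_comp (fun i' => M _ (_, i') * _), Fintype.sum_prod_type,
    consEquiv_apply, Emat_cons0, mul_ite, mul_zero, Fintype.sum_ite_eq']
  conv_rhs => rw [Finset.sum_comm]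
  exact Finset.sum_congr rfl fun a' _ => Finset.sum_comm

end ExtensionOperator

section AdjointMap

variable {da d k : ℕ} (hk : 0 < k)

theorem Adag_add (U V : Matrix (Fin da × Fin d) (Fin da × Fin d) ℂ) :
    Adag da d k hk (U + V) = Adag da d k hk U + Adag da d k hk V := by
  simp only [Adag, Emat_add, Matrix.mul_add, Matrix.add_mul]

theorem Adag_smul (c : ℂ) (U : Matrix (Fin da × Fin d) (Fin da × Fin d) ℂ) :
    Adag da d k hk (c • U) = c • Adag da d k hk U := by
  simp only [Adag, Emat_smul, Matrix.mul_smul, Matrix.smul_mul]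

theorem Adag_neg (U : Matrix (Fin da × Fin d) (Fin da × Fin d) ℂ) :
    Adag da d k hk (-U) = -Adag da d k hk U := by
  simpa using Adag_smul hk (-1) U

theorem Adag_one : Adag da d k hk 1 = 1 := by
  rw [Adag, Emat_one, Matrix.mul_one,
    one_kronecker_conjTranspose_mul_self Pmat_conjTranspose_mul_self]

theorem trace_Amap_mul (X : Matrix (Fin da × Jk d k) (Fin da × Jk d k) ℂ)
    (W : Matrix (Fin da × Fin d) (Fin da × Fin d) ℂ) :
    (Amap da d k X * W).trace = (X * Adag da d k hk W).trace := by
  rw [Amap, trace_PTr_mul hk, Adag, Matrix.mul_assoc, Matrix.mul_assoc, trace_mul_comm,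
    Matrix.mul_assoc, Matrix.mul_assoc]

end AdjointMap

theorem trace_mul_nonpos_of_posSemidef_pTransp {m α : Type*} [Fintype m] [Fintype α]
    {B Z X : Matrix (m × α) (m × α) ℂ} (hBZ : (-(B + pTransp Z)).PosSemidef)
    (hZ : Z.PosSemidef) (hX : X.PosSemidef) (hTX : (pTransp X).PosSemidef) :
    (X * B).trace ≤ 0 := by
  have hsplit : X * B = -(X * -(B + pTransp Z)) - X * pTransp Z := by noncomm_ring
  rw [hsplit, trace_sub, trace_neg, trace_mul_pTransp]
  exact sub_nonpos.mpr
    ((neg_nonpos.mpr (hX.trace_mul_nonneg hBZ)).trans (hTX.trace_mul_nonneg hZ))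

theorem stmt15_general (da d k : ℕ) (hk : 0 < k)
    (ρ : Matrix (Fin da × Fin d) (Fin da × Fin d) ℂ)
    (hρtr : ρ.trace = 1)
    (u : Matrix (Fin da × Fin d) (Fin da × Fin d) ℂ)
    (z : Matrix (Fin da × Jk d k) (Fin da × Jk d k) ℂ) (hz : z.IsHermitian)
    (h1 : (-(Adag da d k hk u) - pTransp z).IsHermitian)
    (hlt : ((ρ * u).trace).re + lamMax h1 + lamMax hz < 0)
    (W : Matrix (Fin da × Fin d) (Fin da × Fin d) ℂ)
    (hW : W = -u - (((lamMax h1 + lamMax hz : ℝ)) : ℂ) •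
        (1 : Matrix (Fin da × Fin d) (Fin da × Fin d) ℂ))
    (Z : Matrix (Fin da × Jk d k) (Fin da × Jk d k) ℂ)
    (hZ : Z = -z + ((lamMax hz : ℝ) : ℂ) •
        (1 : Matrix (Fin da × Jk d k) (Fin da × Jk d k) ℂ)) :
    0 < ((ρ * W).trace).re ∧
    Z.PosSemidef ∧
    (-(Adag da d k hk W + pTransp Z)).PosSemidef ∧
    ∀ X : Matrix (Fin da × Jk d k) (Fin da × Jk d k) ℂ,
      X.IsHermitian → X.PosSemidef → (pTransp X).PosSemidef →
        ((Amap da d k X * W).trace).re ≤ 0 := by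
  have hZpsd : Z.PosSemidef := by
    rw [hZ, neg_add_eq_sub]
    exact posSemidef_lamMax_smul_one_sub hz
  have hnsd : (-(Adag da d k hk W + pTransp Z)).PosSemidef := by
    convert posSemidef_lamMax_smul_one_sub h1 using 1
    simp only [hW, hZ, sub_eq_add_neg, Adag_add, Adag_neg, Adag_smul, Adag_one, pTransp_add,
      pTransp_neg, pTransp_smul, pTransp_one]
    push_cast
    module
  refine ⟨?_, hZpsd, hnsd, fun X _ hX hTX => ?_⟩
  · have hρW : (ρ * W).trace = -(ρ * u).trace - ((lamMax h1 + lamMax hz : ℝ) : ℂ) := by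
      rw [hW, Matrix.mul_sub, Matrix.mul_neg, Matrix.mul_smul, Matrix.mul_one, trace_sub,
        trace_neg, trace_smul, hρtr, smul_eq_mul, mul_one]
    rw [hρW, Complex.sub_re, Complex.neg_re, Complex.ofReal_re]
    linarith
  · rw [trace_Amap_mul hk]
    exact Complex.re_le_re (trace_mul_nonpos_of_posSemidef_pTransp hnsd hZpsd hX hTX)

theorem stmt15 (da d k : ℕ) (hda : 0 < da) (hd : 0 < d) (hk : 0 < k)
    (ρ : Matrix (Fin da × Fin d) (Fin da × Fin d) ℂ)
    (hρ : ρ.PosSemidef) (hρtr : ρ.trace = 1)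
    (u : Matrix (Fin da × Fin d) (Fin da × Fin d) ℂ) (hu : u.IsHermitian)
    (z : Matrix (Fin da × Jk d k) (Fin da × Jk d k) ℂ) (hz : z.IsHermitian)
    (h1 : (-(Adag da d k hk u) - pTransp z).IsHermitian)
    (hlt : ((ρ * u).trace).re + lamMax h1 + lamMax hz < 0)
    (W : Matrix (Fin da × Fin d) (Fin da × Fin d) ℂ)
    (hW : W = -u - (((lamMax h1 + lamMax hz : ℝ)) : ℂ) •
        (1 : Matrix (Fin da × Fin d) (Fin da × Fin d) ℂ))
    (Z : Matrix (Fin da × Jk d k) (Fin da × Jk d k) ℂ)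
    (hZ : Z = -z + ((lamMax hz : ℝ) : ℂ) •
        (1 : Matrix (Fin da × Jk d k) (Fin da × Jk d k) ℂ)) :
    0 < ((ρ * W).trace).re ∧
    Z.PosSemidef ∧
    (-(Adag da d k hk W + pTransp Z)).PosSemidef ∧
    ∀ X : Matrix (Fin da × Jk d k) (Fin da × Jk d k) ℂ,
      X.IsHermitian → X.PosSemidef → (pTransp X).PosSemidef →
        ((Amap da d k X * W).trace).re ≤ 0 :=
  stmt15_general da d k hk ρ hρtr u z hz h1 hlt W hW Z hZ
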